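/- arXiv:2510.03143 — 7 statements merged into one kernel-verified Lean document; each statement's English description precedes it below -/
import Mathlib

section
/- Let S, O be finite sets of centres and define Ψ(S,O) = Σ_{j∈X̄} (δ(j,σ(j,S))² + δ(j,σ(j,O))²) where X̄ is the set of points whose nearest centre in S lies in S−O and whose nearest centre in O lies in O−S. If cost(S) ≤ cost(O) + 2ε·Ψ(S,O) with ε < 1/2, and the costs are nonnegative, then cost(S) ≤ (1+2ε)/(1−2ε) · cost(O). In particular Ψ(S,O) ≤ cost(S) + cost(O). -/
/-- If `cost(S) ≤ cost(O) + 2ε·Ψ(S,O)` with `ε < 1/2`, then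
`cost(S) ≤ (1+2ε)/(1−2ε)·cost(O)`; and in particular `Ψ(S,O) ≤ cost(S) + cost(O)`. -/
theorem stmt0 {V : Type*} [MetricSpace V] [DecidableEq V]
    (X S O : Finset V) (σS σO : V → V)
    (hσS : ∀ j, σS j ∈ S) (hσO : ∀ j, σO j ∈ O)
    (hnS : ∀ j, ∀ s ∈ S, dist j (σS j) ≤ dist j s)
    (hnO : ∀ j, ∀ o ∈ O, dist j (σO j) ≤ dist j o)
    (ε : ℝ) (hε0 : 0 ≤ ε) (hε : ε < 1/2)
    (hgood : (∑ j ∈ X, (dist j (σS j))^2)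
        ≤ (∑ j ∈ X, (dist j (σO j))^2)
          + 2 * ε * ∑ j ∈ X.filter (fun j => σS j ∈ S \ O ∧ σO j ∈ O \ S),
              ((dist j (σS j))^2 + (dist j (σO j))^2)) :
    (∑ j ∈ X.filter (fun j => σS j ∈ S \ O ∧ σO j ∈ O \ S),
        ((dist j (σS j))^2 + (dist j (σO j))^2))
      ≤ (∑ j ∈ X, (dist j (σS j))^2) + (∑ j ∈ X, (dist j (σO j))^2) ∧
    (∑ j ∈ X, (dist j (σS j))^2)
      ≤ (1 + 2*ε) / (1 - 2*ε) * (∑ j ∈ X, (dist j (σO j))^2) := by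
  have hPsi : (∑ j ∈ X.filter (fun j => σS j ∈ S \ O ∧ σO j ∈ O \ S),
        ((dist j (σS j))^2 + (dist j (σO j))^2))
      ≤ (∑ j ∈ X, (dist j (σS j))^2) + (∑ j ∈ X, (dist j (σO j))^2) := by
    rw [← Finset.sum_add_distrib]
    exact Finset.sum_le_sum_of_subset_of_nonneg (Finset.filter_subset _ _)
      (fun j _ _ => by positivity)
  refine ⟨hPsi, ?_⟩
  have h1 : (∑ j ∈ X, (dist j (σS j))^2)
      ≤ (∑ j ∈ X, (dist j (σO j))^2)
        + 2 * ε * ((∑ j ∈ X, (dist j (σS j))^2) + (∑ j ∈ X, (dist j (σO j))^2)) := by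
    refine hgood.trans ?_
    have := mul_le_mul_of_nonneg_left hPsi (by linarith : (0:ℝ) ≤ 2 * ε)
    linarith
  have h2 : (0:ℝ) < 1 - 2*ε := by linarith
  rw [div_mul_eq_mul_div, le_div_iff₀ h2]
  ring_nf
  ring_nf at h1
  nlinarith [Finset.sum_nonneg (fun j (_ : j ∈ X) => sq_nonneg (dist j (σO j)))]
end

section
/- For any real polynomial p, the number of strictly positive real roots of p, counted with multiplicity, is at most the number of sign changes in the sequence of nonzero coefficients of p (Descartes' rule of signs). -/
/-- Number of sign changes in a list of reals: the number of consecutive pairs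
with opposite signs. -/
noncomputable def signChanges (l : List ℝ) : ℕ :=
  (l.zip l.tail).countP (fun q => decide (q.1 * q.2 < 0))

/-- The coefficients of a polynomial that are nonzero, listed in order of
decreasing degree. -/
noncomputable def coeffList (p : Polynomial ℝ) : List ℝ :=
  ((p.support.sort (· ≤ ·)).reverse).map p.coeff

/-! ### Sign variation on lists (zeros allowed) -/

noncomputable def V (l : List ℝ) : ℕ := signChanges (l.filter (fun x => x ≠ 0))

noncomputable def fh (l : List ℝ) : ℝ := (l.filter (fun x => x ≠ 0)).headI

lemma signChanges_cons (x : ℝ) (m : List ℝ) :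
    signChanges (x :: m) = (if x * m.headI < 0 then 1 else 0) + signChanges m := by
  cases m with
  | nil =>
      simp [signChanges, List.headI, show (default : ℝ) = 0 from rfl]
  | cons y m' =>
      simp only [signChanges, List.zip_cons_cons, List.tail_cons, List.countP_cons, List.headI,
        decide_eq_true_eq]
      exact Nat.add_comm _ _

lemma filter_cons_ne {x : ℝ} (hx : x ≠ 0) (l : List ℝ) :
    (x :: l).filter (fun x => x ≠ 0) = x :: l.filter (fun x => x ≠ 0) := by
  simp [List.filter_cons, hx]

lemma V_cons_zero (l : List ℝ) : V ((0:ℝ) :: l) = V l := by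
  simp [V]

lemma V_cons (x : ℝ) (hx : x ≠ 0) (l : List ℝ) :
    V (x :: l) = (if x * fh l < 0 then 1 else 0) + V l := by
  rw [V, filter_cons_ne hx, signChanges_cons]; rfl

lemma fh_cons {x : ℝ} (hx : x ≠ 0) (l : List ℝ) : fh (x :: l) = x := by
  rw [fh, filter_cons_ne hx]; rfl

lemma V_le_V_cons (x : ℝ) (l : List ℝ) : V l ≤ V (x :: l) := by
  by_cases hx : x = 0
  · subst hx; rw [V_cons_zero]
  · rw [V_cons x hx]; omega

lemma V_cons_le (x : ℝ) (l : List ℝ) : V (x :: l) ≤ V l + 1 := by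
  by_cases hx : x = 0
  · subst hx; rw [V_cons_zero]; omega
  · rw [V_cons x hx]; split <;> omega

lemma V_mid_zero (x : ℝ) (l : List ℝ) : V (x :: (0:ℝ) :: l) = V (x :: l) := by
  simp [V, List.filter_cons]

lemma mul_neg_iff_of_pos_mul {x y : ℝ} (hxy : 0 < x * y) (h : ℝ) :
    x * h < 0 ↔ y * h < 0 := by
  rcases mul_pos_iff.mp hxy with ⟨hx, hy⟩ | ⟨hx, hy⟩
  · constructor <;> intro hh <;> nlinarith
  · constructor <;> intro hh <;> nlinarith

lemma V_cons_same_sign {x y : ℝ} (hxy : 0 < x * y) (l : List ℝ) :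
    V (x :: l) = V (y :: l) := by
  have hx : x ≠ 0 := by rintro rfl; simp at hxy
  have hy : y ≠ 0 := by rintro rfl; simp at hxy
  rw [V_cons x hx, V_cons y hy, if_congr (mul_neg_iff_of_pos_mul hxy (fh l)) rfl rfl]

lemma V_all_zero {l : List ℝ} (h : ∀ x ∈ l, x = 0) :
    V l = 0 ∧ fh l = 0 := by
  have : l.filter (fun x => x ≠ 0) = [] := by
    rw [List.filter_eq_nil_iff]
    intro a ha
    simp [h a ha]
  constructor
  · rw [V, this]; rfl
  · rw [fh, this]; rfl

/-! ### Multiplication by (X - a) on descending coefficient lists -/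

noncomputable def g (a : ℝ) : ℝ → List ℝ → List ℝ
  | c, [] => [-(a*c)]
  | c, b :: bs => (b - a*c) :: g a b bs

lemma V_nil : V ([] : List ℝ) = 0 := rfl

lemma fh_nil : fh ([] : List ℝ) = 0 := rfl

lemma iteLeOne (P : Prop) [Decidable P] : (if P then 1 else 0) ≤ 1 := by split <;> omega

lemma core (a : ℝ) (ha : 0 < a) : ∀ (bs : List ℝ) (c : ℝ),
    (c ≠ 0 ∨ ∃ x ∈ bs, x ≠ 0) → V (c :: bs) + 1 ≤ V (c :: g a c bs) := by
  intro bs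
  induction bs with
  | nil =>
      intro c hc
      have hc' : c ≠ 0 := by
        rcases hc with h | ⟨x, hx, _⟩
        · exact h
        · simp at hx
      have hac : -(a*c) ≠ 0 := by
        simp only [neg_ne_zero]
        exact mul_ne_zero ha.ne' hc'
      have hcd : c * -(a*c) < 0 := by
        have : 0 < c * c := mul_self_pos.mpr hc'
        nlinarith
      show V [c] + 1 ≤ V [c, -(a*c)]
      have e1 : V [c] = 0 := by
        rw [V_cons c hc', fh_nil, mul_zero, if_neg (lt_irrefl 0), V_nil]
      have e2 : V [c, -(a*c)] = 1 + V [-(a*c)] := by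
        rw [V_cons c hc', fh_cons hac, if_pos hcd]
      omega
  | cons b bs' ih =>
      intro c hc
      show V (c :: b :: bs') + 1 ≤ V (c :: (b - a*c) :: g a b bs')
      by_cases hcz : c = 0
      · subst hcz
        rw [V_cons_zero, V_cons_zero]
        simp only [mul_zero, sub_zero]
        apply ih b
        rcases hc with h | ⟨x, hx, hx0⟩
        · exact absurd rfl h
        · rcases List.mem_cons.mp hx with rfl | hx'
          · exact Or.inl hx0
          · exact Or.inr ⟨x, hx', hx0⟩
      · have hcc : (0:ℝ) < c * c := mul_self_pos.mpr hcz
        by_cases hbz : b = 0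
        · subst hbz
          simp only [zero_sub]
          set d : ℝ := -(a*c) with hd
          have hdne : d ≠ 0 := by
            rw [hd]; simp only [neg_ne_zero]; exact mul_ne_zero ha.ne' hcz
          have hcd : c * d < 0 := by rw [hd]; nlinarith
          have eL : V (c :: (0:ℝ) :: bs') = (if c * fh bs' < 0 then 1 else 0) + V bs' := by
            rw [V_mid_zero, V_cons c hcz]
          have eR : V (c :: d :: g a 0 bs') = 1 + V (d :: g a 0 bs') := by
            rw [V_cons c hcz, fh_cons hdne, if_pos hcd]
          rw [eL, eR]
          by_cases hbs : ∃ x ∈ bs', x ≠ 0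
          · have h2 := ih 0 (Or.inr hbs)
            rw [V_cons_zero, V_cons_zero] at h2
            have h4 : V (g a 0 bs') ≤ V (d :: g a 0 bs') := V_le_V_cons _ _
            have h5 := iteLeOne (c * fh bs' < 0)
            omega
          · push_neg at hbs
            have h5 := V_all_zero hbs
            rw [h5.1, h5.2, mul_zero, if_neg (lt_irrefl 0)]
            omega
        · have hG := ih b (Or.inl hbz)
          set G := g a b bs' with hGdef
          set d : ℝ := b - a*c with hd
          have hbb : (0:ℝ) < b * b := mul_self_pos.mpr hbz
          rcases lt_trichotomy (b * c) 0 with hbc | hbc | hbc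
          · -- b and c have opposite signs
            have hdb : 0 < d * b := by rw [hd]; nlinarith
            have hdne : d ≠ 0 := by
              intro h
              rw [h, zero_mul] at hdb
              exact lt_irrefl 0 hdb
            have hcd : c * d < 0 := by rw [hd]; nlinarith
            have hcb : c * b < 0 := by nlinarith
            have eL : V (c :: b :: bs') = 1 + V (b :: bs') := by
              rw [V_cons c hcz, fh_cons hbz, if_pos hcb]
            have eR : V (c :: d :: G) = 1 + V (b :: G) := by
              rw [V_cons c hcz, fh_cons hdne, if_pos hcd, V_cons_same_sign hdb]
            rw [eL, eR]
            omega
          · exact absurd hbc (mul_ne_zero hbz hcz)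
          · -- b and c have the same sign
            have hcb : ¬ (c * b < 0) := by nlinarith
            have eL : V (c :: b :: bs') = V (b :: bs') := by
              rw [V_cons c hcz, fh_cons hbz, if_neg hcb, zero_add]
            rw [eL]
            have hbG : V (b :: G) = (if b * fh G < 0 then 1 else 0) + V G := V_cons b hbz G
            rcases lt_trichotomy (d * c) 0 with hdc | hdc | hdc
            · -- d opposite to c
              have hdne : d ≠ 0 := by
                intro h
                rw [h, zero_mul] at hdc
                exact lt_irrefl 0 hdc
              have hcd : c * d < 0 := by nlinarith
              have eR : V (c :: d :: G) = 1 + V (d :: G) := by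
                rw [V_cons c hcz, fh_cons hdne, if_pos hcd]
              rw [eR]
              have h7 : V G ≤ V (d :: G) := V_le_V_cons _ _
              have h8 := iteLeOne (b * fh G < 0)
              omega
            · -- d = 0
              have hd0 : d = 0 := by
                rcases mul_eq_zero.mp hdc with h | h
                · exact h
                · exact absurd h hcz
              have eR : V (c :: d :: G) = (if c * fh G < 0 then 1 else 0) + V G := by
                rw [hd0, V_mid_zero, V_cons c hcz]
              have hsame : (if c * fh G < 0 then 1 else 0) = (if b * fh G < 0 then 1 else 0) := by
                rw [if_congr (mul_neg_iff_of_pos_mul (by nlinarith : (0:ℝ) < c * b) (fh G)) rfl rfl]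
              rw [eR]
              omega
            · -- d same sign as c
              have hdne : d ≠ 0 := by
                intro h
                rw [h, zero_mul] at hdc
                exact lt_irrefl 0 hdc
              have hdb : 0 < d * b := by nlinarith
              have hcd : ¬ (c * d < 0) := by nlinarith
              have eR : V (c :: d :: G) = V (b :: G) := by
                rw [V_cons c hcz, fh_cons hdne, if_neg hcd, zero_add, V_cons_same_sign hdb]
              rw [eR]
              omega

/-! ### Connecting polynomials to descending coefficient lists -/

noncomputable def descList (p : Polynomial ℝ) : List ℝ :=
  ((List.range (p.natDegree + 1)).reverse).map p.coeff

lemma support_eq (p : Polynomial ℝ) :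
    p.support = (Finset.range (p.natDegree + 1)).filter (fun i => p.coeff i ≠ 0) := by
  ext i
  simp only [Polynomial.mem_support_iff, Finset.mem_filter, Finset.mem_range, Nat.lt_succ_iff]
  exact ⟨fun h => ⟨Polynomial.le_natDegree_of_ne_zero h, h⟩, fun h => h.2⟩

lemma sort_support (p : Polynomial ℝ) :
    p.support.sort (· ≤ ·) = (List.range (p.natDegree + 1)).filter (fun i => p.coeff i ≠ 0) := by
  refine (fun h1 h2 h3 => List.Perm.eq_of_pairwise' (r := (· ≤ ·)) h2 h3 h1) ?_ ?_ ?_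
  · rw [List.perm_ext_iff_of_nodup (Finset.sort_nodup _ _) (List.nodup_range.filter _)]
    intro i
    rw [Finset.mem_sort, support_eq, List.mem_filter, Finset.mem_filter]
    simp [List.mem_range, Finset.mem_range]
  · exact Finset.pairwise_sort _ _
  · exact (List.pairwise_lt_range.filter _).imp le_of_lt

lemma coeffList_eq (p : Polynomial ℝ) :
    coeffList p = (descList p).filter (fun x => x ≠ 0) := by
  unfold coeffList descList
  rw [sort_support, ← List.filter_reverse, List.filter_map]
  rfl

lemma range_rev_succ (n : ℕ) (f : ℕ → ℝ) :
    (List.range (n+1)).reverse.map f = f n :: (List.range n).reverse.map f := by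
  rw [List.range_succ]
  simp

lemma g_eq (a : ℝ) (f F : ℕ → ℝ) (h0 : F 0 = -(a * f 0))
    (hs : ∀ i, F (i+1) = f i - a * f (i+1)) :
    ∀ n, g a (f n) ((List.range n).reverse.map f) = (List.range (n+1)).reverse.map F := by
  intro n
  induction n with
  | zero =>
      simp [g, List.range_succ, h0]
  | succ n ihn =>
      rw [range_rev_succ n f, range_rev_succ (n+1) F]
      show (f n - a * f (n+1)) :: g a (f n) ((List.range n).reverse.map f) = _
      rw [ihn, hs n]

lemma step (a : ℝ) (ha : 0 < a) (q : Polynomial ℝ) (hq : q ≠ 0) :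
    signChanges (coeffList q) + 1 ≤
      signChanges (coeffList ((Polynomial.X - Polynomial.C a) * q)) := by
  set p := (Polynomial.X - Polynomial.C a) * q with hpdef
  have hXC : (Polynomial.X - Polynomial.C a : Polynomial ℝ) ≠ 0 := Polynomial.X_sub_C_ne_zero a
  have hp : p ≠ 0 := mul_ne_zero hXC hq
  have hdeg : p.natDegree = q.natDegree + 1 := by
    rw [hpdef, Polynomial.natDegree_mul hXC hq, Polynomial.natDegree_X_sub_C]
    omega
  have hF0 : p.coeff 0 = -(a * q.coeff 0) := by
    rw [hpdef, Polynomial.mul_coeff_zero]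
    simp only [Polynomial.coeff_sub, Polynomial.coeff_X_zero, Polynomial.coeff_C_zero]
    ring
  have hFs : ∀ i, p.coeff (i+1) = q.coeff i - a * q.coeff (i+1) := by
    intro i
    rw [hpdef, sub_mul, Polynomial.coeff_sub, Polynomial.coeff_X_mul, Polynomial.coeff_C_mul]
  have hVq : signChanges (coeffList q) = V (descList q) := by rw [coeffList_eq]; rfl
  have hVp : signChanges (coeffList p) = V (descList p) := by rw [coeffList_eq]; rfl
  have htop : p.coeff (q.natDegree + 1) = q.coeff q.natDegree := by
    rw [hFs q.natDegree, Polynomial.coeff_eq_zero_of_natDegree_lt (Nat.lt_succ_self q.natDegree), mul_zero, sub_zero]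
  have hd : descList p =
      q.coeff q.natDegree :: g a (q.coeff q.natDegree) ((List.range q.natDegree).reverse.map q.coeff) := by
    rw [descList, hdeg, range_rev_succ (q.natDegree + 1) p.coeff, htop,
      g_eq a q.coeff p.coeff hF0 hFs q.natDegree]
  have hdq : descList q = q.coeff q.natDegree :: (List.range q.natDegree).reverse.map q.coeff :=
    range_rev_succ q.natDegree q.coeff
  rw [hVq, hVp, hd, hdq]
  exact core a ha _ _ (Or.inl (by
    rw [← Polynomial.leadingCoeff]
    exact Polynomial.leadingCoeff_ne_zero.mpr hq))

lemma main_aux : ∀ (n : ℕ) (p : Polynomial ℝ), p ≠ 0 →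
    Multiset.card (p.roots.filter (fun x => 0 < x)) = n → n ≤ signChanges (coeffList p) := by
  intro n
  induction n with
  | zero => intro p _ _; exact Nat.zero_le _
  | succ n ihn =>
      intro p hp hcard
      have hne : (p.roots.filter (fun x => 0 < x)) ≠ 0 := by
        intro h
        rw [h] at hcard
        simp at hcard
      obtain ⟨a, ha⟩ := Multiset.exists_mem_of_ne_zero hne
      have haroot : a ∈ p.roots := Multiset.mem_of_mem_filter ha
      have hapos : 0 < a := Multiset.of_mem_filter ha
      obtain ⟨q, hq⟩ := Polynomial.dvd_iff_isRoot.mpr (Polynomial.isRoot_of_mem_roots haroot)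
      have hq0 : q ≠ 0 := by
        rintro rfl
        rw [mul_zero] at hq
        exact hp hq
      have hroots : p.roots = a ::ₘ q.roots := by
        rw [hq, Polynomial.roots_mul (hq ▸ hp), Polynomial.roots_X_sub_C,
          ← Multiset.singleton_add, Multiset.singleton_add]
      have hcard' : Multiset.card (q.roots.filter (fun x => 0 < x)) = n := by
        rw [hroots, Multiset.filter_cons, if_pos hapos] at hcard
        simp only [Multiset.card_add, Multiset.card_singleton] at hcard
        omega
      have h1 := ihn q hq0 hcard'
      have h2 := step a hapos q hq0
      rw [hq]
      omega

/-- Descartes' rule of signs: the number of strictly positive real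
roots of `p`, counted with multiplicity, is at most the number of sign changes
in the sequence of nonzero coefficients of `p`. -/
theorem stmt4 (p : Polynomial ℝ) (hp : p ≠ 0) :
    Multiset.card (p.roots.filter (fun x => 0 < x)) ≤ signChanges (coeffList p) := by
  exact main_aux _ p hp rfl
end

section
/- Fix 0 < t₁ < t₂ < t₃ and suppose a sphere in ℝ⁴ with centre p and radius r passes through the moment-curve points γ(t₁), γ(t₂), γ(t₃) (where γ(t) = (t,t²,t³,t⁴)) and is tangent to the curve at γ(t₂) and γ(t₃), meaning t₂ and t₃ are double roots of f(t) = ‖γ(t) − p‖² − r². Then for every t ∈ (t₁,t₂) ∪ (t₂,t₃) ∪ (t₃,∞), the point γ(t) lies strictly outside the sphere: ‖γ(t) − p‖ > r. -/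
/-- The moment curve in ℝ⁴. -/
noncomputable def gamma4 (t : ℝ) : EuclideanSpace ℝ (Fin 4) :=
  WithLp.toLp 2 ![t, t^2, t^3, t^4]

set_option maxHeartbeats 4000000 in
/-- if a sphere in ℝ⁴ passes through `γ(t₁)` and is tangent to the
moment curve at `γ(t₂)`, `γ(t₃)` (with `0 < t₁ < t₂ < t₃`), then the curve lies
strictly outside the sphere on `(t₁,t₂) ∪ (t₂,t₃) ∪ (t₃,∞)`. -/
theorem stmt7 (t₁ t₂ t₃ : ℝ) (h0 : 0 < t₁) (h12 : t₁ < t₂) (h23 : t₂ < t₃)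
    (p : EuclideanSpace ℝ (Fin 4)) (r : ℝ) (hr : 0 < r)
    (h1 : ‖gamma4 t₁ - p‖^2 - r^2 = 0)
    (h2 : ‖gamma4 t₂ - p‖^2 - r^2 = 0)
    (h3 : ‖gamma4 t₃ - p‖^2 - r^2 = 0)
    (h2' : deriv (fun t => ‖gamma4 t - p‖^2 - r^2) t₂ = 0)
    (h3' : deriv (fun t => ‖gamma4 t - p‖^2 - r^2) t₃ = 0) :
    ∀ t, t ∈ Set.Ioo t₁ t₂ ∪ Set.Ioo t₂ t₃ ∪ Set.Ioi t₃ → r < ‖gamma4 t - p‖ := by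
  set a := p 0 with hpa
  set b := p 1 with hpb
  set c := p 2 with hpc
  set d := p 3 with hpd
  have hnorm : ∀ u : ℝ, ‖gamma4 u - p‖^2
      = (u - a)^2 + (u^2 - b)^2 + (u^3 - c)^2 + (u^4 - d)^2 := by
    intro u
    rw [EuclideanSpace.norm_eq, Real.sq_sqrt (by positivity)]
    simp [gamma4, Fin.sum_univ_four, Real.norm_eq_abs, sq_abs]
    rfl
  have hder : ∀ u : ℝ, deriv (fun x => ‖gamma4 x - p‖^2 - r^2) u
      = 2*(u-a) + 4*u*(u^2-b) + 6*u^2*(u^3-c) + 8*u^3*(u^4-d) := by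
    intro u
    have he : (fun x => ‖gamma4 x - p‖^2 - r^2)
        = fun x => (x - a)^2 + (x^2 - b)^2 + (x^3 - c)^2 + (x^4 - d)^2 - r^2 :=
      funext fun x => by rw [hnorm x]
    rw [he]
    have H : HasDerivAt (fun x : ℝ => (x - a)^2 + (x^2 - b)^2 + (x^3 - c)^2 + (x^4 - d)^2 - r^2)
        (2*(u-a) + 4*u*(u^2-b) + 6*u^2*(u^3-c) + 8*u^3*(u^4-d)) u := by
      have h1d : HasDerivAt (fun x : ℝ => (x - a)^2) (2*(u-a)^1*1) u :=
        ((hasDerivAt_id u).sub_const a).pow 2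
      have h2d : HasDerivAt (fun x : ℝ => (x^2 - b)^2) (2*(u^2-b)^1*(2*u^1)) u :=
        ((hasDerivAt_pow 2 u).sub_const b).pow 2
      have h3d : HasDerivAt (fun x : ℝ => (x^3 - c)^2) (2*(u^3-c)^1*(3*u^2)) u :=
        ((hasDerivAt_pow 3 u).sub_const c).pow 2
      have h4d : HasDerivAt (fun x : ℝ => (x^4 - d)^2) (2*(u^4-d)^1*(4*u^3)) u :=
        ((hasDerivAt_pow 4 u).sub_const d).pow 2
      have := (((h1d.add h2d).add h3d).add h4d).sub_const (r^2)
      exact this.congr_deriv (by ring)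
    exact H.deriv
  rw [hnorm t₁] at h1
  rw [hnorm t₂] at h2
  rw [hnorm t₃] at h3
  rw [hder t₂] at h2'
  rw [hder t₃] at h3'
  have p2 : (0:ℝ) < t₂ := h0.trans h12
  have p3 : (0:ℝ) < t₃ := p2.trans h23
  intro t ht
  have htt1 : t₁ < t := by
    rcases ht with (h | h) | h
    · exact h.1
    · exact h12.trans h.1
    · exact h12.trans (h23.trans h)
  have ht2 : t ≠ t₂ := by
    rcases ht with (h | h) | h
    · exact ne_of_lt h.2
    · exact ne_of_gt h.1
    · exact ne_of_gt (h23.trans h)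
  have ht3 : t ≠ t₃ := by
    rcases ht with (h | h) | h
    · exact ne_of_lt (h.2.trans h23)
    · exact ne_of_lt h.2
    · exact ne_of_gt h
  have ht0 : (0:ℝ) < t := h0.trans htt1
  have hq2 : (0:ℝ) < (2)*t₃ + (2)*t₂ + t₁ := by positivity
  have hq1 : (0:ℝ) < (1) + (3)*t₃^2 + (4)*t₂*t₃ + (3)*t₂^2 + (2)*t₁*t₃ + (2)*t₁*t₂ + t₁^2 := by positivity
  have hq0 : (0:ℝ) < (2)*t₃ + (4)*t₃^3 + (2)*t₂ + (6)*t₂*t₃^2 + (6)*t₂^2*t₃ + (4)*t₂^3 + t₁ + (3)*t₁*t₃^2 + (4)*t₁*t₂*t₃ + (3)*t₁*t₂^2 + (2)*t₁^2*t₃ + (2)*t₁^2*t₂ + t₁^3 := by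
    linarith [pow_pos p3 3, mul_pos p2 (pow_pos p3 2), mul_pos (pow_pos p2 2) p3,
      pow_pos p2 3, mul_pos h0 (pow_pos p3 2), mul_pos (mul_pos h0 p2) p3,
      mul_pos h0 (pow_pos p2 2), mul_pos (pow_pos h0 2) p3, mul_pos (pow_pos h0 2) p2,
      pow_pos h0 3, h0.le, p2.le, p3.le]
  have hq : (0:ℝ) < (t^3 + ((2)*t₃ + (2)*t₂ + t₁)*t^2 + ((1) + (3)*t₃^2 + (4)*t₂*t₃ + (3)*t₂^2 + (2)*t₁*t₃ + (2)*t₁*t₂ + t₁^2)*t + ((2)*t₃ + (4)*t₃^3 + (2)*t₂ + (6)*t₂*t₃^2 + (6)*t₂^2*t₃ + (4)*t₂^3 + t₁ + (3)*t₁*t₃^2 + (4)*t₁*t₂*t₃ + (3)*t₁*t₂^2 + (2)*t₁^2*t₃ + (2)*t₁^2*t₂ + t₁^3)) := by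
    linarith [pow_pos ht0 3, mul_pos hq2 (pow_pos ht0 2), mul_pos hq1 ht0, hq0]
  have hDne : ((t₂-t₁)^2*(t₃-t₁)^2*(t₃-t₂)^4 : ℝ) ≠ 0 := by
    have e1 : t₂ - t₁ ≠ 0 := sub_ne_zero.mpr (ne_of_gt h12)
    have e2 : t₃ - t₁ ≠ 0 := sub_ne_zero.mpr (ne_of_gt (h12.trans h23))
    have e3 : t₃ - t₂ ≠ 0 := sub_ne_zero.mpr (ne_of_gt h23)
    positivity
  have key : ((t - a)^2 + (t^2 - b)^2 + (t^3 - c)^2 + (t^4 - d)^2 - r^2)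
      = (t-t₁)*(t-t₂)^2*(t-t₃)^2*(t^3 + ((2)*t₃ + (2)*t₂ + t₁)*t^2 + ((1) + (3)*t₃^2 + (4)*t₂*t₃ + (3)*t₂^2 + (2)*t₁*t₃ + (2)*t₁*t₂ + t₁^2)*t + ((2)*t₃ + (4)*t₃^3 + (2)*t₂ + (6)*t₂*t₃^2 + (6)*t₂^2*t₃ + (4)*t₂^3 + t₁ + (3)*t₁*t₃^2 + (4)*t₁*t₂*t₃ + (3)*t₁*t₂^2 + (2)*t₁^2*t₃ + (2)*t₁^2*t₂ + t₁^3)) := by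
    have eq0 : ((1 - 2*d) - ((-3)*t₃^2 + (-5)*t₃^4 + (-4)*t₂*t₃ + (-8)*t₂*t₃^3 + (-3)*t₂^2 + (-9)*t₂^2*t₃^2 + (-8)*t₂^3*t₃ + (-5)*t₂^4 + (-2)*t₁*t₃ + (-4)*t₁*t₃^3 + (-2)*t₁*t₂ + (-6)*t₁*t₂*t₃^2 + (-6)*t₁*t₂^2*t₃ + (-4)*t₁*t₂^3 + (-1)*t₁^2 + (-3)*t₁^2*t₃^2 + (-4)*t₁^2*t₂*t₃ + (-3)*t₁^2*t₂^2 + (-2)*t₁^3*t₃ + (-2)*t₁^3*t₂ + (-1)*t₁^4)) * (-((t₂-t₁)^2*(t₃-t₁)^2*(t₃-t₂)^4)) = 0 := by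
      linear_combination ((-1)*t₃^4 + (4)*t₂*t₃^3 + (-6)*t₂^2*t₃^2 + (4)*t₂^3*t₃ + (-1)*t₂^4) * h1 + (t₃^4 + (-4)*t₂*t₃^3 + (3)*t₂^2*t₃^2 + (6)*t₁*t₂*t₃^2 + (-6)*t₁*t₂^2*t₃ + (-3)*t₁^2*t₃^2 + (3)*t₁^2*t₂^2 + (2)*t₁^3*t₃ + (-2)*t₁^3*t₂) * h2 + ((3)*t₂^2*t₃^2 + (-4)*t₂^3*t₃ + t₂^4 + (-6)*t₁*t₂*t₃^2 + (6)*t₁*t₂^2*t₃ + (3)*t₁^2*t₃^2 + (-3)*t₁^2*t₂^2 + (-2)*t₁^3*t₃ + (2)*t₁^3*t₂) * h3 + ((-1)*t₂*t₃^4 + (2)*t₂^2*t₃^3 + (-1)*t₂^3*t₃^2 + t₁*t₃^4 + (-3)*t₁*t₂^2*t₃^2 + (2)*t₁*t₂^3*t₃ + (-2)*t₁^2*t₃^3 + (3)*t₁^2*t₂*t₃^2 + (-1)*t₁^2*t₂^3 + t₁^3*t₃^2 + (-2)*t₁^3*t₂*t₃ + t₁^3*t₂^2) * h2' + ((-1)*t₂^2*t₃^3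 + (2)*t₂^3*t₃^2 + (-1)*t₂^4*t₃ + (2)*t₁*t₂*t₃^3 + (-3)*t₁*t₂^2*t₃^2 + t₁*t₂^4 + (-1)*t₁^2*t₃^3 + (3)*t₁^2*t₂^2*t₃ + (-2)*t₁^2*t₂^3 + t₁^3*t₃^2 + (-2)*t₁^3*t₂*t₃ + t₁^3*t₂^2) * h3'
    have eq1 : ((-2*c) - ((2)*t₃^3 + (4)*t₃^5 + (8)*t₂*t₃^2 + (16)*t₂*t₃^4 + (8)*t₂^2*t₃ + (22)*t₂^2*t₃^3 + (2)*t₂^3 + (22)*t₂^3*t₃^2 + (16)*t₂^4*t₃ + (4)*t₂^5 + (4)*t₁*t₃^2 + (8)*t₁*t₃^4 + (8)*t₁*t₂*t₃ + (20)*t₁*t₂*t₃^3 + (4)*t₁*t₂^2 + (24)*t₁*t₂^2*t₃^2 + (20)*t₁*t₂^3*t₃ + (8)*t₁*t₂^4 + (2)*t₁^2*t₃ + (6)*t₁^2*t₃^3 + (2)*t₁^2*t₂ + (14)*t₁^2*t₂*t₃^2 + (14)*t₁^2*t₂^2*t₃ + (6)*t₁^2*t₂^3 + (4)*t₁^3*t₃^2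 + (8)*t₁^3*t₂*t₃ + (4)*t₁^3*t₂^2 + (2)*t₁^4*t₃ + (2)*t₁^4*t₂)) * (-((t₂-t₁)^2*(t₃-t₁)^2*(t₃-t₂)^4)) = 0 := by
      linear_combination ((2)*t₃^5 + (-6)*t₂*t₃^4 + (4)*t₂^2*t₃^3 + (4)*t₂^3*t₃^2 + (-6)*t₂^4*t₃ + (2)*t₂^5) * h1 + ((-2)*t₃^5 + (6)*t₂*t₃^4 + (-4)*t₂^3*t₃^2 + (-8)*t₁*t₂*t₃^3 + (8)*t₁*t₂^3*t₃ + (4)*t₁^2*t₃^3 + (-4)*t₁^2*t₂^3 + (-2)*t₁^4*t₃ + (2)*t₁^4*t₂) * h2 + ((-4)*t₂^2*t₃^3 + (6)*t₂^4*t₃ + (-2)*t₂^5 + (8)*t₁*t₂*t₃^3 + (-8)*t₁*t₂^3*t₃ + (-4)*t₁^2*t₃^3 + (4)*t₁^2*t₂^3 + (2)*t₁^4*t₃ + (-2)*t₁^4*t₂) * h3 + ((2)*t₂*t₃^5 + (-3)*t₂^2*t₃^4 + t₂^4*t₃^2 + (-2)*t₁*t₃^5 + (4)*t₁*t₂^2*t₃^3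 + (-2)*t₁*t₂^4*t₃ + (3)*t₁^2*t₃^4 + (-4)*t₁^2*t₂*t₃^3 + t₁^2*t₂^4 + (-1)*t₁^4*t₃^2 + (2)*t₁^4*t₂*t₃ + (-1)*t₁^4*t₂^2) * h2' + (t₂^2*t₃^4 + (-3)*t₂^4*t₃^2 + (2)*t₂^5*t₃ + (-2)*t₁*t₂*t₃^4 + (4)*t₁*t₂^3*t₃^2 + (-2)*t₁*t₂^5 + t₁^2*t₃^4 + (-4)*t₁^2*t₂^3*t₃ + (3)*t₁^2*t₂^4 + (-1)*t₁^4*t₃^2 + (2)*t₁^4*t₂*t₃ + (-1)*t₁^4*t₂^2) * h3'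
    have eq2 : ((1 - 2*b) - ((-4)*t₂*t₃^3 + (-8)*t₂*t₃^5 + (-7)*t₂^2*t₃^2 + (-17)*t₂^2*t₃^4 + (-4)*t₂^3*t₃ + (-20)*t₂^3*t₃^3 + (-17)*t₂^4*t₃^2 + (-8)*t₂^5*t₃ + (-2)*t₁*t₃^3 + (-4)*t₁*t₃^5 + (-10)*t₁*t₂*t₃^2 + (-22)*t₁*t₂*t₃^4 + (-10)*t₁*t₂^2*t₃ + (-34)*t₁*t₂^2*t₃^3 + (-2)*t₁*t₂^3 + (-34)*t₁*t₂^3*t₃^2 + (-22)*t₁*t₂^4*t₃ + (-4)*t₁*t₂^5 + (-1)*t₁^2*t₃^2 + (-3)*t₁^2*t₃^4 + (-4)*t₁^2*t₂*t₃ + (-16)*t₁^2*t₂*t₃^3 + (-1)*t₁^2*t₂^2 + (-22)*t₁^2*t₂^2*t₃^2 + (-16)*t₁^2*t₂^3*t₃ + (-3)*t₁^2*t₂^4 + (-2)*t₁^3*t₃^3 + (-10)*t₁^3*t₂*t₃^2 + (-10)*t₁^3*t₂^2*t₃ + (-2)*t₁^3*t₂^3 + (-1)*t₁^4*t₃^2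 + (-4)*t₁^4*t₂*t₃ + (-1)*t₁^4*t₂^2)) * (-((t₂-t₁)^2*(t₃-t₁)^2*(t₃-t₂)^4)) = 0 := by
      linear_combination ((-1)*t₃^6 + (9)*t₂^2*t₃^4 + (-16)*t₂^3*t₃^3 + (9)*t₂^4*t₃^2 + (-1)*t₂^6) * h1 + (t₃^6 + (-9)*t₂^2*t₃^4 + (8)*t₂^3*t₃^3 + (12)*t₁*t₂^2*t₃^3 + (-12)*t₁*t₂^3*t₃^2 + (-4)*t₁^3*t₃^3 + (4)*t₁^3*t₂^3 + (3)*t₁^4*t₃^2 + (-3)*t₁^4*t₂^2) * h2 + ((8)*t₂^3*t₃^3 + (-9)*t₂^4*t₃^2 + t₂^6 + (-12)*t₁*t₂^2*t₃^3 + (12)*t₁*t₂^3*t₃^2 + (4)*t₁^3*t₃^3 + (-4)*t₁^3*t₂^3 + (-3)*t₁^4*t₃^2 + (3)*t₁^4*t₂^2) * h3 + ((-1)*t₂*t₃^6 + (3)*t₂^3*t₃^4 + (-2)*t₂^4*t₃^3 + t₁*t₃^6 + (-4)*t₁*t₂^3*t₃^3 + (3)*t₁*t₂^4*t₃^2 +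 (-3)*t₁^3*t₃^4 + (4)*t₁^3*t₂*t₃^3 + (-1)*t₁^3*t₂^4 + (2)*t₁^4*t₃^3 + (-3)*t₁^4*t₂*t₃^2 + t₁^4*t₂^3) * h2' + ((-2)*t₂^3*t₃^4 + (3)*t₂^4*t₃^3 + (-1)*t₂^6*t₃ + (3)*t₁*t₂^2*t₃^4 + (-4)*t₁*t₂^3*t₃^3 + t₁*t₂^6 + (-1)*t₁^3*t₃^4 + (4)*t₁^3*t₂^3*t₃ + (-3)*t₁^3*t₂^4 + t₁^4*t₃^3 + (-3)*t₁^4*t₂^2*t₃ + (2)*t₁^4*t₂^3) * h3'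
    have eq3 : ((-2*a) - ((2)*t₂^2*t₃^3 + (4)*t₂^2*t₃^5 + (2)*t₂^3*t₃^2 + (6)*t₂^3*t₃^4 + (6)*t₂^4*t₃^3 + (4)*t₂^5*t₃^2 + (4)*t₁*t₂*t₃^3 + (8)*t₁*t₂*t₃^5 + (8)*t₁*t₂^2*t₃^2 + (20)*t₁*t₂^2*t₃^4 + (4)*t₁*t₂^3*t₃ + (24)*t₁*t₂^3*t₃^3 + (20)*t₁*t₂^4*t₃^2 + (8)*t₁*t₂^5*t₃ + (2)*t₁^2*t₂*t₃^2 + (6)*t₁^2*t₂*t₃^4 + (2)*t₁^2*t₂^2*t₃ + (14)*t₁^2*t₂^2*t₃^3 + (14)*t₁^2*t₂^3*t₃^2 + (6)*t₁^2*t₂^4*t₃ + (4)*t₁^3*t₂*t₃^3 + (8)*t₁^3*t₂^2*t₃^2 + (4)*t₁^3*t₂^3*t₃ + (2)*t₁^4*t₂*t₃^2 + (2)*t₁^4*t₂^2*t₃)) * (-((t₂-t₁)^2*(t₃-t₁)^2*(t₃-t₂)^4)) = 0 := by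
      linear_combination ((2)*t₂*t₃^6 + (-6)*t₂^2*t₃^5 + (4)*t₂^3*t₃^4 + (4)*t₂^4*t₃^3 + (-6)*t₂^5*t₃^2 + (2)*t₂^6*t₃) * h1 + ((-2)*t₂*t₃^6 + (6)*t₂^2*t₃^5 + (-4)*t₂^3*t₃^4 + (-12)*t₁^2*t₂^2*t₃^3 + (12)*t₁^2*t₂^3*t₃^2 + (8)*t₁^3*t₂*t₃^3 + (-8)*t₁^3*t₂^3*t₃ + (-6)*t₁^4*t₂*t₃^2 + (6)*t₁^4*t₂^2*t₃) * h2 + ((-4)*t₂^4*t₃^3 + (6)*t₂^5*t₃^2 + (-2)*t₂^6*t₃ + (12)*t₁^2*t₂^2*t₃^3 + (-12)*t₁^2*t₂^3*t₃^2 + (-8)*t₁^3*t₂*t₃^3 + (8)*t₁^3*t₂^3*t₃ + (6)*t₁^4*t₂*t₃^2 + (-6)*t₁^4*t₂^2*t₃) * h3 + (t₂^2*t₃^6 + (-2)*t₂^3*t₃^5 + t₂^4*t₃^4 + (-1)*t₁^2*t₃^6 + (4)*t₁^2*t₂^3*t₃^3 + (-3)*t₁^2*t₂^4*t₃^2 +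 (2)*t₁^3*t₃^5 + (-4)*t₁^3*t₂^2*t₃^3 + (2)*t₁^3*t₂^4*t₃ + (-1)*t₁^4*t₃^4 + (3)*t₁^4*t₂^2*t₃^2 + (-2)*t₁^4*t₂^3*t₃) * h2' + (t₂^4*t₃^4 + (-2)*t₂^5*t₃^3 + t₂^6*t₃^2 + (-3)*t₁^2*t₂^2*t₃^4 + (4)*t₁^2*t₂^3*t₃^3 + (-1)*t₁^2*t₂^6 + (2)*t₁^3*t₂*t₃^4 + (-4)*t₁^3*t₂^3*t₃^2 + (2)*t₁^3*t₂^5 + (-2)*t₁^4*t₂*t₃^3 + (3)*t₁^4*t₂^2*t₃^2 + (-1)*t₁^4*t₂^4) * h3'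
    have eq4 : ((a^2 + b^2 + c^2 + d^2 - r^2) - ((-2)*t₁*t₂^2*t₃^3 + (-4)*t₁*t₂^2*t₃^5 + (-2)*t₁*t₂^3*t₃^2 + (-6)*t₁*t₂^3*t₃^4 + (-6)*t₁*t₂^4*t₃^3 + (-4)*t₁*t₂^5*t₃^2 + (-1)*t₁^2*t₂^2*t₃^2 + (-3)*t₁^2*t₂^2*t₃^4 + (-4)*t₁^2*t₂^3*t₃^3 + (-3)*t₁^2*t₂^4*t₃^2 + (-2)*t₁^3*t₂^2*t₃^3 + (-2)*t₁^3*t₂^3*t₃^2 + (-1)*t₁^4*t₂^2*t₃^2)) * (-((t₂-t₁)^2*(t₃-t₁)^2*(t₃-t₂)^4)) = 0 := by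
      linear_combination ((-1)*t₂^2*t₃^6 + (4)*t₂^3*t₃^5 + (-6)*t₂^4*t₃^4 + (4)*t₂^5*t₃^3 + (-1)*t₂^6*t₃^2) * h1 + ((2)*t₁*t₂*t₃^6 + (-6)*t₁*t₂^2*t₃^5 + (4)*t₁*t₂^3*t₃^4 + (-1)*t₁^2*t₃^6 + (9)*t₁^2*t₂^2*t₃^4 + (-8)*t₁^2*t₂^3*t₃^3 + (2)*t₁^3*t₃^5 + (-6)*t₁^3*t₂*t₃^4 + (4)*t₁^3*t₂^3*t₃^2 + (-1)*t₁^4*t₃^4 + (4)*t₁^4*t₂*t₃^3 + (-3)*t₁^4*t₂^2*t₃^2) * h2 + ((4)*t₁*t₂^4*t₃^3 + (-6)*t₁*t₂^5*t₃^2 + (2)*t₁*t₂^6*t₃ + (-8)*t₁^2*t₂^3*t₃^3 + (9)*t₁^2*t₂^4*t₃^2 + (-1)*t₁^2*t₂^6 + (4)*t₁^3*t₂^2*t₃^3 + (-6)*t₁^3*t₂^4*t₃ + (2)*t₁^3*t₂^5 + (-3)*t₁^4*t₂^2*t₃^2 + (4)*t₁^4*t₂^3*t₃ + (-1)*t₁^4*t₂^4)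 * h3 + ((-1)*t₁*t₂^2*t₃^6 + (2)*t₁*t₂^3*t₃^5 + (-1)*t₁*t₂^4*t₃^4 + t₁^2*t₂*t₃^6 + (-3)*t₁^2*t₂^3*t₃^4 + (2)*t₁^2*t₂^4*t₃^3 + (-2)*t₁^3*t₂*t₃^5 + (3)*t₁^3*t₂^2*t₃^4 + (-1)*t₁^3*t₂^4*t₃^2 + t₁^4*t₂*t₃^4 + (-2)*t₁^4*t₂^2*t₃^3 + t₁^4*t₂^3*t₃^2) * h2' + ((-1)*t₁*t₂^4*t₃^4 + (2)*t₁*t₂^5*t₃^3 + (-1)*t₁*t₂^6*t₃^2 + (2)*t₁^2*t₂^3*t₃^4 + (-3)*t₁^2*t₂^4*t₃^3 + t₁^2*t₂^6*t₃ + (-1)*t₁^3*t₂^2*t₃^4 + (3)*t₁^3*t₂^4*t₃^2 + (-2)*t₁^3*t₂^5*t₃ + t₁^4*t₂^2*t₃^3 + (-2)*t₁^4*t₂^3*t₃^2 + t₁^4*t₂^4*t₃) * h3'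
    have hne : (-((t₂-t₁)^2*(t₃-t₁)^2*(t₃-t₂)^4) : ℝ) ≠ 0 := neg_ne_zero.mpr hDne
    have z0 := (mul_eq_zero.mp eq0).resolve_right hne
    have z1 := (mul_eq_zero.mp eq1).resolve_right hne
    have z2 := (mul_eq_zero.mp eq2).resolve_right hne
    have z3 := (mul_eq_zero.mp eq3).resolve_right hne
    have z4 := (mul_eq_zero.mp eq4).resolve_right hne
    linear_combination t^4 * z0 + t^3 * z1 + t^2 * z2 + t * z3 + z4
  have hpos : 0 < (t-t₁)*(t-t₂)^2*(t-t₃)^2*(t^3 + ((2)*t₃ + (2)*t₂ + t₁)*t^2 + ((1) + (3)*t₃^2 + (4)*t₂*t₃ + (3)*t₂^2 + (2)*t₁*t₃ + (2)*t₁*t₂ + t₁^2)*t + ((2)*t₃ + (4)*t₃^3 + (2)*t₂ + (6)*t₂*t₃^2 + (6)*t₂^2*t₃ + (4)*t₂^3 + t₁ + (3)*t₁*t₃^2 + (4)*t₁*t₂*t₃ + (3)*t₁*t₂^2 + (2)*t₁^2*t₃ + (2)*t₁^2*t₂ + t₁^3)) := by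
    have b1 : (0:ℝ) < t - t₁ := sub_pos.mpr htt1
    have b2 : (0:ℝ) < (t - t₂)^2 := pow_two_pos_of_ne_zero (sub_ne_zero.mpr ht2)
    have b3 : (0:ℝ) < (t - t₃)^2 := pow_two_pos_of_ne_zero (sub_ne_zero.mpr ht3)
    exact mul_pos (mul_pos (mul_pos b1 b2) b3) hq
  have hlt : r^2 < ‖gamma4 t - p‖^2 := by
    rw [hnorm t]
    linarith [key, hpos]
  exact lt_of_pow_lt_pow_left₀ 2 (norm_nonneg _) hlt
end

section
/- Let i ≠ j be positive integers and consider the 3-dimensional moment curve γ(t) = (t,t²,t³). The unique point (a,b,c) equidistant from γ(i) and γ(j) with the sphere of that radius tangent to γ at both points is given by a = ij(i+j)(3i² + 3ij + 3j² + 1), b = −(3i⁴ + 12i³j + 15i²j² + i² + 12ij³ + 4ij + 3j⁴ + j² − 1)/2, c = (i+j)(2i² + ij + 2j² + 1); that is, (a,b,c) satisfies the system: ‖γ(i)−(a,b,c)‖² = ‖γ(j)−(a,b,c)‖², 6i⁵ + 4i³ − 6ci² + 2(1−2b)i − 2a = 0, and 6j⁵ + 4j³ − 6cj² + 2(1−2b)j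 − 2a = 0. -/
/-- for distinct positive integers `i ≠ j`, the point `(a,b,c)`
with `a = ij(i+j)(3i²+3ij+3j²+1)`,
`b = −(3i⁴+12i³j+15i²j²+i²+12ij³+4ij+3j⁴+j²−1)/2`,
`c = (i+j)(2i²+ij+2j²+1)` satisfies the tangency system for the
3-dimensional moment curve at `t = i` and `t = j`. -/
theorem stmt10 (i j : ℕ) (hi : 0 < i) (hj : 0 < j) (hij : i ≠ j)
    (a b c : ℝ)
    (ha : a = (i:ℝ) * j * ((i:ℝ) + j) * (3*(i:ℝ)^2 + 3*(i:ℝ)*j + 3*(j:ℝ)^2 + 1))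
    (hb : b = -(3*(i:ℝ)^4 + 12*(i:ℝ)^3*j + 15*(i:ℝ)^2*(j:ℝ)^2 + (i:ℝ)^2
        + 12*(i:ℝ)*(j:ℝ)^3 + 4*(i:ℝ)*j + 3*(j:ℝ)^4 + (j:ℝ)^2 - 1) / 2)
    (hc : c = ((i:ℝ) + j) * (2*(i:ℝ)^2 + (i:ℝ)*j + 2*(j:ℝ)^2 + 1)) :
    ((i:ℝ) - a)^2 + ((i:ℝ)^2 - b)^2 + ((i:ℝ)^3 - c)^2
      = ((j:ℝ) - a)^2 + ((j:ℝ)^2 - b)^2 + ((j:ℝ)^3 - c)^2 ∧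
    6*(i:ℝ)^5 + 4*(i:ℝ)^3 - 6*c*(i:ℝ)^2 + 2*(1 - 2*b)*(i:ℝ) - 2*a = 0 ∧
    6*(j:ℝ)^5 + 4*(j:ℝ)^3 - 6*c*(j:ℝ)^2 + 2*(1 - 2*b)*(j:ℝ) - 2*a = 0 := by
  subst ha hb hc; refine ⟨by ring, by ring, by ring⟩
end

section
/- Let m ≥ 1, ε > 0, ε' = ε/(2m), and r > 0. For integers 0 ≤ s < s* ≤ m: (1+ε')·r(m + (m−s*)ε) < r(m + (m−s)ε). That is, a solution covering strictly more edges remains strictly cheaper even after all distances are multiplied by up to 1+ε'. -/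
/-- with `ε' = ε/(2m)` and `0 ≤ s < s* ≤ m`, a solution covering
`s*` edges remains strictly cheaper than one covering `s` edges even after all
distances are multiplied by up to `1 + ε'`:
`(1+ε')·r(m + (m−s*)ε) < r(m + (m−s)ε)`. (Here `0 < ε < 1`, as in the paper.) -/
theorem stmt14 (m : ℕ) (hm : 1 ≤ m) (ε r : ℝ) (hε : 0 < ε) (hε1 : ε < 1)
    (hr : 0 < r) (s sstar : ℕ) (hss : s < sstar) (hsm : sstar ≤ m) :
    (1 + ε / (2 * m)) * (r * ((m:ℝ) + ((m:ℝ) - sstar) * ε))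
      < r * ((m:ℝ) + ((m:ℝ) - s) * ε) := by
  have hM : (1:ℝ) ≤ (m:ℝ) := by exact_mod_cast hm
  have hM0 : (0:ℝ) < (m:ℝ) := by linarith
  have h1 : (s:ℝ) + 1 ≤ (sstar:ℝ) := by exact_mod_cast hss
  have h2 : (sstar:ℝ) ≤ (m:ℝ) := by exact_mod_cast hsm
  have hs0 : (0:ℝ) ≤ (s:ℝ) := Nat.cast_nonneg s
  have h2m : (0:ℝ) < 2*(m:ℝ) := by linarith
  rw [show (1 + ε/(2*(m:ℝ))) = (2*(m:ℝ)+ε)/(2*(m:ℝ)) by field_simp, div_mul_eq_mul_div,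
    div_lt_iff₀ h2m]
  nlinarith [mul_pos hr hε, mul_nonneg (mul_nonneg hr.le hε.le) (sub_nonneg.mpr h2),
    mul_pos (mul_pos hr hε) hM0, mul_nonneg (mul_nonneg (mul_nonneg hr.le hε.le) hε.le) (sub_nonneg.mpr h2)]
end

section
/- With the grid setup above, Σ_{y ∈ A ∩ D_r} ‖y − a‖₂ ≤ (1/ε²)·((2/3)π(r+ε)³ + ε·π(r+ε)²), i.e. the discrete sum of distances from grid points in the disk to its centre is bounded by the corresponding continuous integral over the slightly enlarged disk plus an O(ε) correction. -/
open MeasureTheory Metric Set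

private lemma stmt16_ball_integral (R : ℝ) (hR : 0 ≤ R) :
    ∫ x in closedBall (0:ℂ) R, ‖x‖ = 2/3 * Real.pi * R^3 := by
  have h := MeasureTheory.integral_fun_norm_addHaar (volume : Measure ℂ)
      (Set.indicator (Set.Icc 0 R) id)
  rw [show (fun x : ℂ => Set.indicator (Set.Icc 0 R) id ‖x‖)
      = Set.indicator (closedBall (0:ℂ) R) (fun x => ‖x‖) from ?_] at h
  · rw [MeasureTheory.integral_indicator (measurableSet_closedBall)] at h
    rw [h, Complex.finrank_real_complex, measureReal_def, Complex.volume_ball]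
    rw [show (fun y : ℝ => y ^ (2-1) • Set.indicator (Set.Icc 0 R) id y)
        = Set.indicator (Set.Icc 0 R) (fun y => y * y) from ?_]
    · rw [MeasureTheory.setIntegral_indicator measurableSet_Icc]
      rw [show Set.Ioi (0:ℝ) ∩ Set.Icc 0 R = Set.Ioc 0 R by
        ext y; simp [Set.mem_Ioc, Set.mem_Icc]; intro h; exact fun _ => h.le]
      rw [← intervalIntegral.integral_of_le hR]
      have : ∫ y in (0:ℝ)..R, y * y = R^3/3 := by
        have : ∫ y in (0:ℝ)..R, y * y = ∫ y in (0:ℝ)..R, y^2 := by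
          congr 1; funext y; ring
        rw [this, integral_pow]; ring
      rw [this]
      simp [ENNReal.toReal_mul, smul_eq_mul]
      ring
    · funext y
      by_cases hy : y ∈ Set.Icc (0:ℝ) R <;> simp [Set.indicator_apply, hy]
  · funext x
    by_cases hx : ‖x‖ ≤ R <;>
      simp [Set.indicator_apply, mem_closedBall_zero_iff, norm_nonneg, hx]

private lemma stmt16_ball_integral' (c : ℂ) (R : ℝ) (hR : 0 ≤ R) :
    ∫ x in closedBall c R, ‖x - c‖ = 2/3 * Real.pi * R^3 := by
  have hmp : MeasurePreserving (fun x : ℂ => x + c) volume volume :=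
    measurePreserving_add_right volume c
  have hemb : MeasurableEmbedding (fun x : ℂ => x + c) :=
    (MeasurableEquiv.addRight c).measurableEmbedding
  have h := hmp.setIntegral_preimage_emb hemb (fun y => ‖y - c‖) (closedBall c R)
  rw [show (fun x : ℂ => x + c) ⁻¹' closedBall c R = closedBall 0 R by
    ext x; simp [mem_closedBall, dist_eq_norm]] at h
  simp only [add_sub_cancel_right] at h
  rw [← h]
  exact stmt16_ball_integral R hR

/-- the sum, over grid points of `εℤ²` lying in the closed disk of
radius `r ≤ 1` about a grid point `a`, of the Euclidean distance to `a`, is at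
most `(1/ε²)·((2/3)π(r+ε)³ + ε·π(r+ε)²)`. -/
theorem stmt16 (ε r : ℝ) (hε : 0 < ε) (hεr : ε ≤ r) (hr : r ≤ 1) (a : ℤ × ℤ)
    (G : Set (ℤ × ℤ))
    (hG : G = {z : ℤ × ℤ |
      Real.sqrt ((ε * z.1 - ε * a.1)^2 + (ε * z.2 - ε * a.2)^2) ≤ r})
    (hfin : G.Finite) :
    ∑ z ∈ hfin.toFinset,
        Real.sqrt ((ε * z.1 - ε * a.1)^2 + (ε * z.2 - ε * a.2)^2)
      ≤ (1 / ε^2) * ((2/3) * Real.pi * (r + ε)^3 + ε * Real.pi * (r + ε)^2) := by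
  classical
  set c : ℂ := ⟨ε * a.1, ε * a.2⟩ with hc
  set p : ℤ × ℤ → ℂ := fun z => ⟨ε * z.1, ε * z.2⟩ with hp
  -- the summand equals the norm of `p z - c`
  have hd : ∀ z : ℤ × ℤ,
      Real.sqrt ((ε * z.1 - ε * a.1)^2 + (ε * z.2 - ε * a.2)^2) = ‖p z - c‖ := by
    intro z
    rw [Complex.norm_def, Complex.normSq_apply]
    have h1 : (p z - c).re = ε * z.1 - ε * a.1 := rfl
    have h2 : (p z - c).im = ε * z.2 - ε * a.2 := rfl
    rw [h1, h2]; ring_nf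
  -- squares around grid points
  set Q : ℤ × ℤ → Set ℂ := fun z => Complex.measurableEquivRealProd ⁻¹'
      ((Set.Ioc (ε * z.1 - ε/2) (ε * z.1 + ε/2)) ×ˢ
       (Set.Ioc (ε * z.2 - ε/2) (ε * z.2 + ε/2))) with hQ
  have hQmeas : ∀ z, MeasurableSet (Q z) := fun z =>
    Complex.measurableEquivRealProd.measurable (measurableSet_Ioc.prod measurableSet_Ioc)
  have hQvol : ∀ z, volume (Q z) = ENNReal.ofReal ε * ENNReal.ofReal ε := by
    intro z
    rw [hQ]
    rw [Complex.volume_preserving_equiv_real_prod.measure_preimage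
      ((measurableSet_Ioc.prod measurableSet_Ioc).nullMeasurableSet)]
    rw [Measure.volume_eq_prod, Measure.prod_prod, Real.volume_Ioc, Real.volume_Ioc]
    congr 1 <;> ring_nf
  -- membership in Q z controls distance to p z
  have hQnear : ∀ z, ∀ x ∈ Q z, ‖x - p z‖ ≤ ε := by
    intro z x hx
    obtain ⟨h1, h2⟩ := hx
    simp only [Complex.measurableEquivRealProd_apply, Set.mem_Ioc] at h1 h2
    have e1 : |(x - p z).re| ≤ ε/2 := by
      have hre : (x - p z).re = x.re - ε * z.1 := rfl
      rw [hre, abs_le]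
      constructor <;> [linarith [h1.1]; linarith [h1.2]]
    have e2 : |(x - p z).im| ≤ ε/2 := by
      have him : (x - p z).im = x.im - ε * z.2 := rfl
      rw [him, abs_le]
      constructor <;> [linarith [h2.1]; linarith [h2.2]]
    calc ‖x - p z‖ = ‖x - p z‖ := rfl
      _ ≤ |(x - p z).re| + |(x - p z).im| := Complex.norm_le_abs_re_add_abs_im _
      _ ≤ ε/2 + ε/2 := add_le_add e1 e2
      _ = ε := by ring
  set K : Set ℂ := closedBall c (r + ε) with hK
  -- squares of points in G lie in K
  have hQK : ∀ z ∈ hfin.toFinset, Q z ⊆ K := by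
    intro z hz x hx
    have hzG : z ∈ G := (hfin.mem_toFinset).1 hz
    have hzr : ‖p z - c‖ ≤ r := by rw [← hd z]; rw [hG] at hzG; exact hzG
    have : ‖x - c‖ ≤ ‖x - p z‖ + ‖p z - c‖ := by
      have := norm_add_le (x - p z) (p z - c)
      simpa [sub_add_sub_cancel] using this
    rw [hK, mem_closedBall, dist_eq_norm]
    linarith [hQnear z x hx]
  set g : ℂ → ℝ := fun x => ‖x - c‖ + ε with hg
  have hgcont : Continuous g := ((continuous_id.sub continuous_const).norm).add continuous_const
  have hgK : IntegrableOn g K volume :=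
    hgcont.continuousOn.integrableOn_compact (isCompact_closedBall c _)
  have hgQ : ∀ z ∈ hfin.toFinset, IntegrableOn g (Q z) volume :=
    fun z hz => hgK.mono_set (hQK z hz)
  have hgpos : ∀ x, 0 ≤ g x := fun x => by positivity
  -- step A : per-square bound
  have hA : ∀ z ∈ hfin.toFinset, ε^2 * ‖p z - c‖ ≤ ∫ x in Q z, g x := by
    intro z hz
    have hzG : z ∈ G := (hfin.mem_toFinset).1 hz
    have hlow : ∀ x ∈ Q z, ‖p z - c‖ ≤ g x := by
      intro x hx
      have h1 : ‖p z - c‖ ≤ ‖p z - x‖ + ‖x - c‖ := by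
        have := norm_add_le (p z - x) (x - c)
        simpa [sub_add_sub_cancel] using this
      have h2 : ‖p z - x‖ = ‖x - p z‖ := by rw [norm_sub_rev]
      have := hQnear z x hx
      rw [hg]; dsimp only; linarith
    have hvol_lt : volume (Q z) < ⊤ := by
      rw [hQvol z]
      exact ENNReal.mul_lt_top ENNReal.ofReal_lt_top ENNReal.ofReal_lt_top
    have hci : IntegrableOn (fun _ : ℂ => ‖p z - c‖) (Q z) volume :=
      integrableOn_const hvol_lt.ne
    have := setIntegral_mono_on (μ := volume) (s := Q z)
      (f := fun _ => ‖p z - c‖) (g := g) hci (hgQ z hz) (hQmeas z) hlow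
    rw [setIntegral_const, measureReal_def, hQvol z, ENNReal.toReal_mul, ENNReal.toReal_ofReal hε.le,
      smul_eq_mul] at this
    calc ε^2 * ‖p z - c‖ = ε * ε * ‖p z - c‖ := by ring
      _ ≤ ∫ x in Q z, g x := this
  -- disjointness of squares
  have hdisj : (hfin.toFinset : Set (ℤ × ℤ)).PairwiseDisjoint Q := by
    intro z _ w _ hzw
    have key : ∀ m n : ℤ, m ≠ n → Disjoint (Set.Ioc (ε * m - ε/2) (ε * m + ε/2))
        (Set.Ioc (ε * n - ε/2) (ε * n + ε/2)) := by
      intro m n hmn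
      rw [Set.Ioc_disjoint_Ioc]
      rcases lt_or_gt_of_ne hmn with h | h
      · have : (m : ℝ) + 1 ≤ n := by exact_mod_cast h
        have : ε * m + ε ≤ ε * n := by nlinarith
        calc min (ε * m + ε/2) (ε * n + ε/2) ≤ ε * m + ε/2 := min_le_left _ _
          _ ≤ ε * n - ε/2 := by linarith
          _ ≤ max (ε * m - ε/2) (ε * n - ε/2) := le_max_right _ _
      · have : (n : ℝ) + 1 ≤ m := by exact_mod_cast h
        have : ε * n + ε ≤ ε * m := by nlinarith
        calc min (ε * m + ε/2) (ε * n + ε/2) ≤ ε * n + ε/2 := min_le_right _ _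
          _ ≤ ε * m - ε/2 := by linarith
          _ ≤ max (ε * m - ε/2) (ε * n - ε/2) := le_max_left _ _
    have : z.1 ≠ w.1 ∨ z.2 ≠ w.2 := by
      by_contra h
      push_neg at h
      exact hzw (Prod.ext h.1 h.2)
    rcases this with h | h
    · exact Disjoint.preimage _ (Set.disjoint_prod.2 (Or.inl (key _ _ (by exact_mod_cast h))))
    · exact Disjoint.preimage _ (Set.disjoint_prod.2 (Or.inr (key _ _ (by exact_mod_cast h))))
  -- step B : sum of integrals = integral over union
  have hB : ∑ z ∈ hfin.toFinset, ∫ x in Q z, g x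
      = ∫ x in ⋃ z ∈ hfin.toFinset, Q z, g x :=
    (integral_biUnion_finset hfin.toFinset (fun z _ => hQmeas z) hdisj hgQ).symm
  -- step C : monotonicity in the set
  have hUK : (⋃ z ∈ hfin.toFinset, Q z) ⊆ K := Set.iUnion₂_subset hQK
  have hC : ∫ x in ⋃ z ∈ hfin.toFinset, Q z, g x ≤ ∫ x in K, g x :=
    setIntegral_mono_set hgK (Filter.Eventually.of_forall hgpos) hUK.eventuallyLE
  -- step D : value of the integral over K
  have hrε : (0:ℝ) ≤ r + ε := by linarith
  have hD : ∫ x in K, g x = 2/3 * Real.pi * (r + ε)^3 + ε * Real.pi * (r + ε)^2 := by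
    have hf1 : IntegrableOn (fun x : ℂ => ‖x - c‖) K volume :=
      ((continuous_id.sub continuous_const).norm).continuousOn.integrableOn_compact
        (isCompact_closedBall c _)
    have hf2 : IntegrableOn (fun _ : ℂ => ε) K volume :=
      integrableOn_const (measure_closedBall_lt_top).ne
    rw [hg]
    rw [integral_add hf1 hf2]
    rw [stmt16_ball_integral' c (r + ε) hrε, setIntegral_const, hK,
      measureReal_def, Complex.volume_closedBall, ENNReal.toReal_mul, smul_eq_mul]
    have : ((ENNReal.ofReal (r + ε)) ^ 2).toReal = (r + ε)^2 := by
      rw [ENNReal.toReal_pow, ENNReal.toReal_ofReal hrε]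
    rw [this]
    have : ((NNReal.pi : ENNReal)).toReal = Real.pi := by
      simp [ENNReal.coe_toReal]
    rw [this]
    ring
  -- put everything together
  have hmain : ε^2 * ∑ z ∈ hfin.toFinset,
      Real.sqrt ((ε * z.1 - ε * a.1)^2 + (ε * z.2 - ε * a.2)^2)
      ≤ 2/3 * Real.pi * (r + ε)^3 + ε * Real.pi * (r + ε)^2 := by
    rw [Finset.mul_sum]
    calc ∑ z ∈ hfin.toFinset,
          ε^2 * Real.sqrt ((ε * z.1 - ε * a.1)^2 + (ε * z.2 - ε * a.2)^2)
        = ∑ z ∈ hfin.toFinset, ε^2 * ‖p z - c‖ := by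
          apply Finset.sum_congr rfl; intro z _; rw [hd z]
      _ ≤ ∑ z ∈ hfin.toFinset, ∫ x in Q z, g x := Finset.sum_le_sum hA
      _ = ∫ x in ⋃ z ∈ hfin.toFinset, Q z, g x := hB
      _ ≤ ∫ x in K, g x := hC
      _ = _ := hD
  have hε2 : (0:ℝ) < ε^2 := by positivity
  calc ∑ z ∈ hfin.toFinset,
        Real.sqrt ((ε * z.1 - ε * a.1)^2 + (ε * z.2 - ε * a.2)^2)
      ≤ (2/3 * Real.pi * (r + ε)^3 + ε * Real.pi * (r + ε)^2) / ε^2 := by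
        rw [le_div_iff₀ hε2]; linarith [hmain]
    _ = (1 / ε^2) * ((2/3) * Real.pi * (r + ε)^3 + ε * Real.pi * (r + ε)^2) := by ring
end

section
/- Let g(t) = ‖(t,t²,t³) − (a,b,c)‖² where a,b,c are as in the moment-curve tangency system for positive integers i < j, and let r² = g(i) = g(j). Then for every positive integer t ∉ {i,j}, g(t) ≥ r² + 1/4. -/
lemma sq_ge_one_of_ne (m n : ℕ) (h : m ≠ n) : 1 ≤ ((m:ℝ) - (n:ℝ))^2 := by
  rcases lt_or_gt_of_ne h with h' | h'
  · have : (m:ℝ) + 1 ≤ (n:ℝ) := by exact_mod_cast Nat.succ_le_of_lt h'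
    nlinarith
  · have : (n:ℝ) + 1 ≤ (m:ℝ) := by exact_mod_cast Nat.succ_le_of_lt h'
    nlinarith

/-- with `a, b, c` as in the moment-curve tangency system for
positive integers `i < j` and `g(t) = (t−a)² + (t²−b)² + (t³−c)²`, we have
`g(i) = g(j) =: r²`, and `g(t) ≥ r² + 1/4` for every positive integer
`t ∉ {i, j}`. -/
theorem stmt18 (i j : ℕ) (hi : 0 < i) (hij : i < j)
    (a b c : ℝ)
    (ha : a = (i:ℝ) * j * ((i:ℝ) + j) * (3*(i:ℝ)^2 + 3*(i:ℝ)*j + 3*(j:ℝ)^2 + 1))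
    (hb : b = -(3*(i:ℝ)^4 + 12*(i:ℝ)^3*j + 15*(i:ℝ)^2*(j:ℝ)^2 + (i:ℝ)^2
        + 12*(i:ℝ)*(j:ℝ)^3 + 4*(i:ℝ)*j + 3*(j:ℝ)^4 + (j:ℝ)^2 - 1) / 2)
    (hc : c = ((i:ℝ) + j) * (2*(i:ℝ)^2 + (i:ℝ)*j + 2*(j:ℝ)^2 + 1)) :
    (((j:ℝ) - a)^2 + ((j:ℝ)^2 - b)^2 + ((j:ℝ)^3 - c)^2
      = ((i:ℝ) - a)^2 + ((i:ℝ)^2 - b)^2 + ((i:ℝ)^3 - c)^2) ∧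
    ∀ t : ℕ, 0 < t → t ≠ i → t ≠ j →
      (((i:ℝ) - a)^2 + ((i:ℝ)^2 - b)^2 + ((i:ℝ)^3 - c)^2) + 1/4
        ≤ ((t:ℝ) - a)^2 + ((t:ℝ)^2 - b)^2 + ((t:ℝ)^3 - c)^2 := by
  subst ha hb hc
  set I := (i:ℝ) with hI
  set J := (j:ℝ) with hJ
  constructor
  · ring
  · intro t ht hti htj
    set T := (t:ℝ) with hT
    have h1 : 1 ≤ (T - I)^2 := sq_ge_one_of_ne t i hti
    have h2 : 1 ≤ (T - J)^2 := sq_ge_one_of_ne t j htj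
    have hIpos : (0:ℝ) < I := by rw [hI]; exact_mod_cast hi
    have hJpos : (0:ℝ) < J := by rw [hJ]; exact_mod_cast lt_trans hi hij
    have hTpos : (0:ℝ) < T := by rw [hT]; exact_mod_cast ht
    have hQ : (1:ℝ) ≤ (T + I + J)^2 + 2*I^2 + 2*I*J + 2*J^2 + 1 := by nlinarith
    have hprod : (1:ℝ) ≤ (T - I)^2 * (T - J)^2 *
        ((T + I + J)^2 + 2*I^2 + 2*I*J + 2*J^2 + 1) := by
      have := mul_le_mul h1 h2 (by linarith) (by linarith)
      have h3 : (1:ℝ) ≤ (T - I)^2 * (T - J)^2 := by linarith [this]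
      nlinarith [h3, hQ]
    have key : ((T - I*J*(I+J)*(3*I^2+3*I*J+3*J^2+1))^2
        + (T^2 - (-(3*I^4+12*I^3*J+15*I^2*J^2+I^2+12*I*J^3+4*I*J+3*J^4+J^2-1)/2))^2
        + (T^3 - (I+J)*(2*I^2+I*J+2*J^2+1))^2)
        - ((I - I*J*(I+J)*(3*I^2+3*I*J+3*J^2+1))^2
        + (I^2 - (-(3*I^4+12*I^3*J+15*I^2*J^2+I^2+12*I*J^3+4*I*J+3*J^4+J^2-1)/2))^2
        + (I^3 - (I+J)*(2*I^2+I*J+2*J^2+1))^2)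
        = (T - I)^2 * (T - J)^2 *
          ((T + I + J)^2 + 2*I^2 + 2*I*J + 2*J^2 + 1) := by ring
    linarith [key, hprod]
end
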